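/- For f(x) = sin(kx) on the circle ℝ/2πℤ (k a positive integer), the 1-Wasserstein distance between μ = f⁺ dx and ν = f⁻ dx satisfies W_1(μ,ν) ≥ c/k for a universal constant c > 0. -/

import Mathlib

open Real MeasureTheory

theorem stmt_17 :
    ∃ c > (0 : ℝ), ∀ k : ℕ, 1 ≤ k →
      c / k ≤ sSup {r : ℝ | ∃ g : ℝ → ℝ, LipschitzWith 1 g ∧ Function.Periodic g (2 * π) ∧
        r = ∫ x in (0 : ℝ)..(2 * π), g x * Real.sin (k * x)} := by
  refine ⟨π, Real.pi_pos, fun k hk => ?_⟩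
  have hk0 : (k : ℝ) ≠ 0 := by positivity
  set S := {r : ℝ | ∃ g : ℝ → ℝ, LipschitzWith 1 g ∧ Function.Periodic g (2 * π) ∧
        r = ∫ x in (0 : ℝ)..(2 * π), g x * Real.sin (k * x)} with hS
  -- the test function
  have hmem : (π / k : ℝ) ∈ S := by
    refine ⟨fun x => Real.sin (k * x) / k, ?_, ?_, ?_⟩
    · have hdiff : Differentiable ℝ (fun x : ℝ => Real.sin (k * x) / k) := by
        fun_prop
      refine lipschitzWith_of_nnnorm_deriv_le hdiff fun x => ?_
      have : deriv (fun x : ℝ => Real.sin (k * x) / k) x = Real.cos (k * x) := by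
        have h1 : HasDerivAt (fun x : ℝ => Real.sin (k * x)) (Real.cos (k * x) * k) x := by
          simpa [Function.comp_def] using (Real.hasDerivAt_sin (k * x)).comp x
            ((hasDerivAt_id x).const_mul (k : ℝ))
        have h2 : HasDerivAt (fun x : ℝ => Real.sin (k * x) / k)
            (Real.cos (k * x) * k / k) x := h1.div_const _
        rw [h2.deriv, mul_div_assoc, div_self hk0, mul_one]
      rw [this]
      simp only [← NNReal.coe_le_coe, coe_nnnorm, Real.norm_eq_abs, NNReal.coe_one]
      exact Real.abs_cos_le_one _
    · intro x
      have : (k : ℝ) * (x + 2 * π) = k * x + k * (2 * π) := by ring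
      simp only []
      rw [this, Real.sin_add_nat_mul_two_pi]
    · have h1 : ∫ x in (0 : ℝ)..(2 * π), Real.sin (k * x) / k * Real.sin (k * x)
          = (1 / k) * ∫ x in (0 : ℝ)..(2 * π), Real.sin (k * x) ^ 2 := by
        rw [← intervalIntegral.integral_const_mul]
        congr 1; ext x; ring
      rw [h1, intervalIntegral.integral_comp_mul_left (fun x => Real.sin x ^ 2) hk0]
      rw [integral_sin_sq]
      have hs : Real.sin ((k : ℝ) * (2 * π)) = 0 := by
        have : (k : ℝ) * (2 * π) = 0 + k * (2 * π) := by ring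
        rw [this, Real.sin_add_nat_mul_two_pi, Real.sin_zero]
      rw [hs]
      simp only [mul_zero, Real.sin_zero, zero_mul, zero_sub, neg_zero, zero_add, sub_zero,
        add_zero, smul_eq_mul]
      field_simp
  -- boundedness
  have hbdd : BddAbove S := by
    refine ⟨2 * π * (2 * π), fun r hr => ?_⟩
    obtain ⟨g, hg, hper, hr⟩ := hr
    have hcont : Continuous g := hg.continuous
    have hsplit : (∫ x in (0 : ℝ)..(2 * π), g x * Real.sin (k * x))
        = (∫ x in (0 : ℝ)..(2 * π), (g x - g 0) * Real.sin (k * x))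
          + g 0 * ∫ x in (0 : ℝ)..(2 * π), Real.sin (k * x) := by
      rw [← intervalIntegral.integral_const_mul, ← intervalIntegral.integral_add]
      · congr 1; ext x; ring
      · exact ((hcont.sub continuous_const).mul
          (Real.continuous_sin.comp (continuous_const.mul continuous_id))).intervalIntegrable _ _
      · exact (continuous_const.mul (Real.continuous_sin.comp
          (continuous_const.mul continuous_id))).intervalIntegrable _ _
    have hzero : (∫ x in (0 : ℝ)..(2 * π), Real.sin (k * x)) = 0 := by
      rw [intervalIntegral.integral_comp_mul_left Real.sin hk0, integral_sin]
      have : (k : ℝ) * (2 * π) = 0 + k * (2 * π) := by ring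
      rw [mul_zero, this, Real.cos_add_nat_mul_two_pi, Real.cos_zero]
      simp
    have hbound : ‖∫ x in (0 : ℝ)..(2 * π), (g x - g 0) * Real.sin (k * x)‖
        ≤ 2 * π * |2 * π - 0| := by
      refine intervalIntegral.norm_integral_le_of_norm_le_const fun x hx => ?_
      rw [Set.uIoc_of_le (by positivity : (0:ℝ) ≤ 2 * π)] at hx
      have h1 : |g x - g 0| ≤ |x - 0| := by
        have := hg.dist_le_mul x 0
        simpa [Real.dist_eq] using this
      have h2 : |x - 0| ≤ 2 * π := by
        rw [sub_zero, abs_of_pos hx.1]; exact hx.2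
      calc ‖(g x - g 0) * Real.sin (k * x)‖
          = |g x - g 0| * |Real.sin (k * x)| := abs_mul _ _
        _ ≤ (2 * π) * 1 := by
            exact mul_le_mul (h1.trans h2) (Real.abs_sin_le_one _) (abs_nonneg _)
              (by positivity)
        _ = 2 * π := mul_one _
    rw [hr, hsplit, hzero, mul_zero, add_zero]
    have := (le_abs_self _).trans ((Real.norm_eq_abs _ ▸ hbound))
    calc (∫ x in (0 : ℝ)..(2 * π), (g x - g 0) * Real.sin (k * x))
        ≤ 2 * π * |2 * π - 0| := this
      _ = 2 * π * (2 * π) := by rw [sub_zero, abs_of_pos (by positivity)]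
  exact le_csSup hbdd hmem
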